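/- arXiv:1208.2241 — 4 statements merged into one kernel-verified Lean document; each statement's English description precedes it below -/
import Mathlib

section
/- Let x, y, z be distinct points in hyperbolic n-space. Let x' be the midpoint of the geodesic segment from x to z and y' the midpoint of the geodesic segment from y to z. Then dist(x', y') ≤ (1/2) · dist(x, y). -/
/-!
Lift the Poincaré ball to the hyperboloid `‖v‖² - t² = -1` in Minkowski space `E × ℝ`; there
`cosh d(x, y)` is minus the Lorentz product of the lifts `X`, `Y`. By the reverse
Cauchy–Schwarz inequality two points of the hyperboloid with Lorentz product `-1` coincide, so the
lift of the midpoint of `x z` is `(X + Z) / (2 cosh (d(x, z) / 2))`. Writing `A`, `B`, `C` for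
the cosh of half of `d(x, z)`, `d(y, z)`, `d(x, y)`, this gives
`cosh d(x', y') = (A² + B² + C² - 1) / (2AB)`, which is at most `C` iff the Gram determinant
`1 + 2ABC - A² - B² - C²` is nonnegative. The same determinant of the full distances
`2A² - 1, 2B² - 1, 2C² - 1` is nonnegative by Cauchy–Schwarz on the spacelike complement of `Z`,
and it equals the half-distance determinant times a positive factor.
-/

open Real

/-- Inverse hyperbolic cosine. -/
noncomputable def arcosh (x : ℝ) : ℝ := Real.log (x + Real.sqrt (x ^ 2 - 1))

/-- A point of hyperbolic `n`-space in the Poincaré ball model. -/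
abbrev HypSpace (n : ℕ) := {p : EuclideanSpace ℝ (Fin n) // ‖p‖ < 1}

/-- The hyperbolic distance in the Poincaré ball model. -/
noncomputable def hDist {n : ℕ} (x y : HypSpace n) : ℝ :=
  _root_.arcosh (1 + 2 * ‖(x : EuclideanSpace ℝ (Fin n)) - (y : EuclideanSpace ℝ (Fin n))‖ ^ 2 /
    ((1 - ‖(x : EuclideanSpace ℝ (Fin n))‖ ^ 2) * (1 - ‖(y : EuclideanSpace ℝ (Fin n))‖ ^ 2)))

/-- `m` is the midpoint of the geodesic segment from `p` to `q`:  it lies on the segment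
(distances add up) and divides it into two equal halves. -/
def IsHypMidpoint {n : ℕ} (p m q : HypSpace n) : Prop :=
  hDist p m = hDist p q / 2 ∧ hDist m q = hDist p q / 2

open RealInnerProductSpace

/-- The determinant of the Gram matrix `!![1, a, c; a, 1, b; c, b, 1]`. -/
def gramDet (a b c : ℝ) : ℝ := 1 + 2 * a * b * c - a ^ 2 - b ^ 2 - c ^ 2

lemma cosh_eq_two_mul_cosh_half_sq_sub_one (t : ℝ) : cosh t = 2 * cosh (t / 2) ^ 2 - 1 := by
  have h := cosh_two_mul (t / 2)
  rw [mul_div_cancel₀ t two_ne_zero] at h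
  linarith [cosh_sq (t / 2)]

lemma gramDet_two_mul_sq_sub_one (A B C : ℝ) :
    gramDet (2 * A ^ 2 - 1) (2 * B ^ 2 - 1) (2 * C ^ 2 - 1) =
      4 * gramDet A B C * (A ^ 2 + B ^ 2 + C ^ 2 - 1 + 2 * A * B * C) := by
  unfold gramDet; ring

lemma gramDet_cosh_half_nonneg {α β γ : ℝ} (h : 0 ≤ gramDet (cosh α) (cosh β) (cosh γ)) :
    0 ≤ gramDet (cosh (α / 2)) (cosh (β / 2)) (cosh (γ / 2)) := by
  rw [cosh_eq_two_mul_cosh_half_sq_sub_one α, cosh_eq_two_mul_cosh_half_sq_sub_one β,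
    cosh_eq_two_mul_cosh_half_sq_sub_one γ, gramDet_two_mul_sq_sub_one] at h
  have hpos : 0 < cosh (α / 2) ^ 2 + cosh (β / 2) ^ 2 + cosh (γ / 2) ^ 2 - 1 +
      2 * cosh (α / 2) * cosh (β / 2) * cosh (γ / 2) := by
    have := one_le_pow₀ (n := 2) (one_le_cosh (α / 2))
    have : 0 < cosh (β / 2) ^ 2 + cosh (γ / 2) ^ 2 +
      2 * cosh (α / 2) * cosh (β / 2) * cosh (γ / 2) := by positivity
    linarith
  exact (mul_nonneg_iff_of_pos_right hpos).mp h |> (mul_nonneg_iff_of_pos_left four_pos).mp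

section Minkowski

variable {E : Type*} [NormedAddCommGroup E] [InnerProductSpace ℝ E]

noncomputable def lorentz : LinearMap.BilinForm ℝ (E × ℝ) :=
  LinearMap.mk₂ ℝ (fun P Q => ⟪P.1, Q.1⟫ - P.2 * Q.2)
    (fun P P' Q => by simp only [Prod.fst_add, Prod.snd_add, inner_add_left]; ring)
    (fun c P Q => by
      simp only [Prod.smul_fst, Prod.smul_snd, real_inner_smul_left, smul_eq_mul]; ring)
    (fun P Q Q' => by simp only [Prod.fst_add, Prod.snd_add, inner_add_right]; ring)
    (fun c P Q => by
      simp only [Prod.smul_fst, Prod.smul_snd, real_inner_smul_right, smul_eq_mul]; ring)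

lemma lorentz_apply (P Q : E × ℝ) : lorentz P Q = ⟪P.1, Q.1⟫ - P.2 * Q.2 := rfl

lemma lorentz_comm (P Q : E × ℝ) : lorentz P Q = lorentz Q P := by
  rw [lorentz_apply, lorentz_apply, real_inner_comm, mul_comm]

lemma neg_lorentz_self_mul_norm_sq_le {T W : E × ℝ} (h : lorentz W T = 0) :
    -lorentz T T * ‖W.1‖ ^ 2 ≤ T.2 ^ 2 * lorentz W W := by
  rw [lorentz_apply, sub_eq_zero] at h
  have hcs : ⟪W.1, T.1⟫ ^ 2 ≤ ‖W.1‖ ^ 2 * ‖T.1‖ ^ 2 := by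
    rw [← mul_pow, ← sq_abs]
    exact pow_le_pow_left₀ (abs_nonneg _) (abs_real_inner_le_norm _ _) 2
  rw [h] at hcs
  rw [lorentz_apply, lorentz_apply, real_inner_self_eq_norm_sq, real_inner_self_eq_norm_sq]
  linear_combination hcs

lemma lorentz_self_nonneg_of_lorentz_eq_zero {T W : E × ℝ} (hT : lorentz T T < 0)
    (h : lorentz W T = 0) : 0 ≤ lorentz W W := by
  have hT2 : 0 < T.2 ^ 2 := by
    rw [lorentz_apply, real_inner_self_eq_norm_sq] at hT; nlinarith [sq_nonneg ‖T.1‖]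
  have := neg_lorentz_self_mul_norm_sq_le h
  exact (mul_nonneg_iff_of_pos_left hT2).mp
    ((mul_nonneg (by linarith) (by positivity)).trans this)

lemma eq_zero_of_lorentz_eq_zero {T W : E × ℝ} (hT : lorentz T T < 0) (h : lorentz W T = 0)
    (hW : lorentz W W = 0) : W = 0 := by
  have hW1 : W.1 = 0 := by
    have := neg_lorentz_self_mul_norm_sq_le h
    rw [hW, mul_zero] at this
    exact norm_eq_zero.mp (pow_eq_zero_iff two_ne_zero |>.mp
      (le_antisymm (nonpos_of_mul_nonpos_right this (by linarith)) (by positivity)))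
  rw [lorentz_apply, hW1, inner_zero_left, zero_sub, neg_eq_zero, mul_self_eq_zero] at hW
  exact Prod.ext hW1 hW

lemma sq_lorentz_le_of_lorentz_eq_zero {T P Q : E × ℝ} (hT : lorentz T T < 0)
    (hP : lorentz P T = 0) (hQ : lorentz Q T = 0) :
    lorentz P Q ^ 2 ≤ lorentz P P * lorentz Q Q := by
  have hquad (t : ℝ) : 0 ≤ lorentz P P * (t * t) + 2 * lorentz P Q * t + lorentz Q Q := by
    have := lorentz_self_nonneg_of_lorentz_eq_zero hT (W := t • P + Q) (by simp [hP, hQ])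
    simp only [map_add, map_smul, LinearMap.add_apply, LinearMap.smul_apply, smul_eq_mul,
      lorentz_comm Q P] at this
    linarith
  have := discrim_le_zero hquad
  rw [discrim] at this
  linarith

lemma eq_of_lorentz_eq_neg_one {M N : E × ℝ} (hM : lorentz M M = -1) (hN : lorentz N N = -1)
    (hMN : lorentz M N = -1) : M = N := by
  rw [← sub_eq_zero]
  refine eq_zero_of_lorentz_eq_zero (T := M) (by linarith) ?_ ?_ <;>
    simp only [map_sub, LinearMap.sub_apply, lorentz_comm N M, hM, hN, hMN] <;> norm_num

lemma eq_inv_smul_add_of_lorentz {X Z M : E × ℝ} {A : ℝ} (hA : A ≠ 0) (hX : lorentz X X = -1)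
    (hZ : lorentz Z Z = -1) (hM : lorentz M M = -1) (hXM : lorentz X M = -A)
    (hMZ : lorentz M Z = -A) (hXZ : lorentz X Z = 1 - 2 * A ^ 2) :
    M = (2 * A)⁻¹ • (X + Z) := by
  refine eq_of_lorentz_eq_neg_one hM ?_ ?_ <;>
    simp only [map_smul, map_add, LinearMap.smul_apply, LinearMap.add_apply, smul_eq_mul,
      lorentz_comm Z X, lorentz_comm M X, hX, hZ, hXZ, hXM, hMZ] <;>
    field_simp <;> ring

lemma gramDet_neg_lorentz_nonneg {X Y Z : E × ℝ} (hX : lorentz X X = -1)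
    (hY : lorentz Y Y = -1) (hZ : lorentz Z Z = -1) :
    0 ≤ gramDet (-lorentz X Y) (-lorentz Y Z) (-lorentz X Z) := by
  -- Cauchy–Schwarz for the projections of `X` and `Y` to the spacelike hyperplane `Z^⊥`
  have hcs := sq_lorentz_le_of_lorentz_eq_zero (T := Z) (P := X + lorentz X Z • Z)
    (Q := Y + lorentz Y Z • Z) (by linarith) (by simp [hZ]) (by simp [hZ])
  simp only [map_add, map_smul, LinearMap.add_apply, LinearMap.smul_apply, smul_eq_mul,
    lorentz_comm Z X, lorentz_comm Z Y, hX, hY, hZ] at hcs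
  unfold gramDet
  linear_combination hcs

/-- Inverse stereographic projection of the unit ball from `(0, -1)` onto the upper sheet of
the hyperboloid `lorentz P P = -1`. -/
noncomputable def toHyperboloid (p : E) : E × ℝ :=
  ((2 / (1 - ‖p‖ ^ 2)) • p, (1 + ‖p‖ ^ 2) / (1 - ‖p‖ ^ 2))

lemma lorentz_toHyperboloid {p q : E} (hp : ‖p‖ < 1) (hq : ‖q‖ < 1) :
    lorentz (toHyperboloid p) (toHyperboloid q) =
      -(1 + 2 * ‖p - q‖ ^ 2 / ((1 - ‖p‖ ^ 2) * (1 - ‖q‖ ^ 2))) := by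
  have hp' : 1 - ‖p‖ ^ 2 ≠ 0 := by nlinarith [norm_nonneg p]
  have hq' : 1 - ‖q‖ ^ 2 ≠ 0 := by nlinarith [norm_nonneg q]
  rw [lorentz_apply, toHyperboloid, toHyperboloid, real_inner_smul_left, real_inner_smul_right,
    norm_sub_sq_real]
  field_simp
  ring

lemma lorentz_toHyperboloid_self {p : E} (hp : ‖p‖ < 1) :
    lorentz (toHyperboloid p) (toHyperboloid p) = -1 := by
  simp [lorentz_toHyperboloid hp hp]

end Minkowski

section HypSpace

variable {n : ℕ}

lemma hDist_eq_arcosh (x y : HypSpace n) :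
    hDist x y = Real.arcosh (-lorentz (toHyperboloid x.1) (toHyperboloid y.1)) := by
  rw [lorentz_toHyperboloid x.2 y.2, neg_neg]
  rfl

lemma one_le_neg_lorentz_toHyperboloid (x y : HypSpace n) :
    1 ≤ -lorentz (toHyperboloid x.1) (toHyperboloid y.1) := by
  have hx : 0 < 1 - ‖x.1‖ ^ 2 := by nlinarith [norm_nonneg x.1, x.2]
  have hy : 0 < 1 - ‖y.1‖ ^ 2 := by nlinarith [norm_nonneg y.1, y.2]
  rw [lorentz_toHyperboloid x.2 y.2, neg_neg, le_add_iff_nonneg_right]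
  positivity

lemma hDist_nonneg (x y : HypSpace n) : 0 ≤ hDist x y := by
  rw [hDist_eq_arcosh]
  exact arcosh_nonneg (one_le_neg_lorentz_toHyperboloid x y)

lemma lorentz_toHyperboloid_eq_neg_cosh_hDist (x y : HypSpace n) :
    lorentz (toHyperboloid x.1) (toHyperboloid y.1) = -cosh (hDist x y) := by
  rw [hDist_eq_arcosh, cosh_arcosh (one_le_neg_lorentz_toHyperboloid x y), neg_neg]

lemma gramDet_cosh_hDist_nonneg (x y z : HypSpace n) :
    0 ≤ gramDet (cosh (hDist x y)) (cosh (hDist y z)) (cosh (hDist x z)) := by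
  simpa only [lorentz_toHyperboloid_eq_neg_cosh_hDist, neg_neg] using
    gramDet_neg_lorentz_nonneg (lorentz_toHyperboloid_self x.2) (lorentz_toHyperboloid_self y.2)
      (lorentz_toHyperboloid_self z.2)

lemma IsHypMidpoint.toHyperboloid_eq {x m z : HypSpace n} (h : IsHypMidpoint x m z) :
    toHyperboloid m.1 =
      (2 * cosh (hDist x z / 2))⁻¹ • (toHyperboloid x.1 + toHyperboloid z.1) := by
  refine eq_inv_smul_add_of_lorentz (cosh_pos _).ne' (lorentz_toHyperboloid_self x.2)
    (lorentz_toHyperboloid_self z.2) (lorentz_toHyperboloid_self m.2) ?_ ?_ ?_ <;>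
    rw [lorentz_toHyperboloid_eq_neg_cosh_hDist]
  · rw [h.1]
  · rw [h.2]
  · rw [cosh_eq_two_mul_cosh_half_sq_sub_one (hDist x z)]; ring

lemma cosh_hDist_of_isHypMidpoint {x y z x' y' : HypSpace n} (hx' : IsHypMidpoint x x' z)
    (hy' : IsHypMidpoint y y' z) :
    2 * cosh (hDist x z / 2) * cosh (hDist y z / 2) * cosh (hDist x' y') =
      cosh (hDist x z / 2) ^ 2 + cosh (hDist y z / 2) ^ 2 + cosh (hDist x y / 2) ^ 2 - 1 := by
  have hA := (cosh_pos (hDist x z / 2)).ne'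
  have hB := (cosh_pos (hDist y z / 2)).ne'
  rw [← neg_neg (cosh (hDist x' y')), ← lorentz_toHyperboloid_eq_neg_cosh_hDist,
    hx'.toHyperboloid_eq, hy'.toHyperboloid_eq]
  simp only [map_smul, map_add, LinearMap.smul_apply, LinearMap.add_apply, smul_eq_mul,
    lorentz_toHyperboloid_self z.2, lorentz_comm (toHyperboloid z.1) (toHyperboloid y.1),
    lorentz_toHyperboloid_eq_neg_cosh_hDist]
  rw [cosh_eq_two_mul_cosh_half_sq_sub_one (hDist x y),
    cosh_eq_two_mul_cosh_half_sq_sub_one (hDist x z),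
    cosh_eq_two_mul_cosh_half_sq_sub_one (hDist y z)]
  field_simp
  ring

end HypSpace

theorem midpoint_dist_le_half_general {n : ℕ} (x y z x' y' : HypSpace n)
    (hx' : IsHypMidpoint x x' z) (hy' : IsHypMidpoint y y' z) :
    hDist x' y' ≤ (1 / 2) * hDist x y := by
  have hgram := gramDet_cosh_half_nonneg (gramDet_cosh_hDist_nonneg x y z)
  have hAB : 0 < 2 * cosh (hDist x z / 2) * cosh (hDist y z / 2) := by positivity
  have hcosh : cosh (hDist x' y') ≤ cosh (hDist x y / 2) := by
    refine le_of_mul_le_mul_left ?_ hAB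
    rw [cosh_hDist_of_isHypMidpoint hx' hy']
    unfold gramDet at hgram
    linarith
  rw [cosh_le_cosh, abs_of_nonneg (hDist_nonneg x' y'),
    abs_of_nonneg (div_nonneg (hDist_nonneg x y) zero_le_two)] at hcosh
  linarith

theorem midpoint_dist_le_half {n : ℕ} (x y z x' y' : HypSpace n)
    (hxy : x ≠ y) (hxz : x ≠ z) (hyz : y ≠ z)
    (hx' : IsHypMidpoint x x' z) (hy' : IsHypMidpoint y y' z) :
    hDist x' y' ≤ (1 / 2) * hDist x y :=
  midpoint_dist_le_half_general x y z x' y' hx' hy'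
end

section
/- Let a, b > 0 and γ ∈ [0, π]. Define c ≥ 0 by cosh(c) = cosh(a)·cosh(b) − sinh(a)·sinh(b)·cos(γ) and d ≥ 0 by cosh(d) = cosh(2a)·cosh(2b) − sinh(2a)·sinh(2b)·cos(γ). Then 2c ≤ d. -/
/-! Doubling the two sides at the common vertex yields an opposite side `d` with
`cosh d = cosh (2 * c) + 2 * (sinh a * sinh b * sin γ) ^ 2`, and `cosh` is increasing in `|x|`. -/

open Real

theorem cosh_two_mul_mul_cosh_two_mul_sub_sinh_two_mul_mul_sinh_two_mul (a b γ : ℝ) :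
    cosh (2 * a) * cosh (2 * b) - sinh (2 * a) * sinh (2 * b) * cos γ =
      2 * (cosh a * cosh b - sinh a * sinh b * cos γ) ^ 2 - 1
        + 2 * (sinh a * sinh b * sin γ) ^ 2 := by
  rw [cosh_two_mul, cosh_two_mul, sinh_two_mul, sinh_two_mul]
  linear_combination (-(cosh b ^ 2 - sinh b ^ 2)) * cosh_sq_sub_sinh_sq a
    - cosh_sq_sub_sinh_sq b - 2 * sinh a ^ 2 * sinh b ^ 2 * sin_sq_add_cos_sq γ

theorem hyperbolic_half_triangle_general (a b : ℝ)
    (γ : ℝ) (c d : ℝ) (hd : 0 ≤ d)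
    (hcoshc : Real.cosh c = Real.cosh a * Real.cosh b - Real.sinh a * Real.sinh b * Real.cos γ)
    (hcoshd : Real.cosh d =
      Real.cosh (2 * a) * Real.cosh (2 * b) - Real.sinh (2 * a) * Real.sinh (2 * b) * Real.cos γ) :
    2 * c ≤ d := by
  have hcosh_le : cosh (2 * c) ≤ cosh d :=
    calc cosh (2 * c) = 2 * (cosh a * cosh b - sinh a * sinh b * cos γ) ^ 2 - 1 := by
          rw [cosh_two_mul, sinh_sq, hcoshc]; ring
      _ ≤ 2 * (cosh a * cosh b - sinh a * sinh b * cos γ) ^ 2 - 1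
            + 2 * (sinh a * sinh b * sin γ) ^ 2 := le_add_of_nonneg_right (by positivity)
      _ = cosh d := by
          rw [hcoshd, cosh_two_mul_mul_cosh_two_mul_sub_sinh_two_mul_mul_sinh_two_mul]
  calc 2 * c ≤ |2 * c| := le_abs_self _
    _ ≤ |d| := cosh_le_cosh.mp hcosh_le
    _ = d := abs_of_nonneg hd

theorem hyperbolic_half_triangle (a b : ℝ) (ha : 0 < a) (hb : 0 < b)
    (γ : ℝ) (hγ : γ ∈ Set.Icc 0 Real.pi) (c d : ℝ) (hc : 0 ≤ c) (hd : 0 ≤ d)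
    (hcoshc : Real.cosh c = Real.cosh a * Real.cosh b - Real.sinh a * Real.sinh b * Real.cos γ)
    (hcoshd : Real.cosh d =
      Real.cosh (2 * a) * Real.cosh (2 * b) - Real.sinh (2 * a) * Real.sinh (2 * b) * Real.cos γ) :
    2 * c ≤ d :=
  hyperbolic_half_triangle_general a b γ c d hd hcoshc hcoshd
end

section
/- For all real a, b and γ with cos²(γ) ≤ 1: 2·(cosh(a)·cosh(b) − sinh(a)·sinh(b)·cos(γ))² − 1 ≤ cosh(2a)·cosh(2b) − sinh(2a)·sinh(2b)·cos(γ). -/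
/-! With `x = sinh a`, `y = sinh b`, the difference of the two sides collapses, by `cosh² - sinh² = 1`
and the double-angle formulas, to `2 x² y² (1 - cos² γ)`. -/

open Real

/-- The right-hand side of the hyperbolic law of cosines, with `c` in place of `cos γ`. -/
noncomputable def hypLawOfCosines (a b c : ℝ) : ℝ :=
  cosh a * cosh b - sinh a * sinh b * c

theorem hypLawOfCosines_two_mul_sub_two_mul_sq (a b c : ℝ) :
    hypLawOfCosines (2 * a) (2 * b) c - (2 * hypLawOfCosines a b c ^ 2 - 1) =
      2 * (sinh a * sinh b) ^ 2 * (1 - c ^ 2) := by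
  rw [hypLawOfCosines, hypLawOfCosines, cosh_two_mul, cosh_two_mul, sinh_two_mul, sinh_two_mul]
  linear_combination -(cosh b ^ 2 - sinh b ^ 2) * cosh_sq_sub_sinh_sq a - cosh_sq_sub_sinh_sq b

theorem two_mul_hypLawOfCosines_sq_sub_one_le {c : ℝ} (a b : ℝ) (hc : c ^ 2 ≤ 1) :
    2 * hypLawOfCosines a b c ^ 2 - 1 ≤ hypLawOfCosines (2 * a) (2 * b) c := by
  rw [← sub_nonneg, hypLawOfCosines_two_mul_sub_two_mul_sq]
  have one_sub_sq_nonneg : 0 ≤ 1 - c ^ 2 := sub_nonneg.2 hc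
  positivity

theorem law_of_cosines_midpoint_core (a b γ : ℝ) (hγ : Real.cos γ ^ 2 ≤ 1) :
    2 * (Real.cosh a * Real.cosh b - Real.sinh a * Real.sinh b * Real.cos γ) ^ 2 - 1 ≤
      Real.cosh (2 * a) * Real.cosh (2 * b) - Real.sinh (2 * a) * Real.sinh (2 * b) * Real.cos γ :=
  two_mul_hypLawOfCosines_sq_sub_one_le a b hγ
end

section
/- In hyperbolic law of cosines form: for a, b > 0, if cosh(c) = cosh(a)cosh(b) − sinh(a)sinh(b)cos(γ) and cosh(d) = cosh(2a)cosh(2b) − sinh(2a)sinh(2b)cos(γ) with γ ∈ (0, π), then 2c < d (strict inequality). -/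
/-!
Expanding `cosh (2c) = 2 cosh² c - 1` with the law of cosines for `c`, the gap
`cosh d - cosh (2c)` collapses to `2 (sinh a sinh b sin γ)²`, which is positive for `a, b > 0`
and `0 < γ < π`; since `cosh` is strictly increasing on `[0, ∞)`, this gives `2c < d`.
-/

open Real

theorem cosh_law_two_mul_sub_cosh_two_mul {a b γ c : ℝ}
    (hcoshc : cosh c = cosh a * cosh b - sinh a * sinh b * cos γ) :
    cosh (2 * a) * cosh (2 * b) - sinh (2 * a) * sinh (2 * b) * cos γ - cosh (2 * c) =
      2 * (sinh a * sinh b * sin γ) ^ 2 := by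
  rw [cosh_two_mul, cosh_two_mul, cosh_two_mul, sinh_two_mul, sinh_two_mul, sinh_sq c, hcoshc]
  linear_combination -2 * sinh a ^ 2 * sinh b ^ 2 * sin_sq_add_cos_sq γ
    - (cosh b ^ 2 - sinh b ^ 2) * cosh_sq a - cosh_sq b

theorem lt_of_cosh_lt_cosh_of_nonneg {x y : ℝ} (hy : 0 ≤ y) (h : cosh x < cosh y) : x < y :=
  calc x ≤ |x| := le_abs_self x
    _ < |y| := cosh_lt_cosh.mp h
    _ = y := abs_of_nonneg hy

theorem hyperbolic_half_triangle_strict_general (a b : ℝ) (ha : 0 < a) (hb : 0 < b)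
    (γ : ℝ) (hγ : γ ∈ Set.Ioo 0 Real.pi) (c d : ℝ) (hd : 0 ≤ d)
    (hcoshc : Real.cosh c = Real.cosh a * Real.cosh b - Real.sinh a * Real.sinh b * Real.cos γ)
    (hcoshd : Real.cosh d =
      Real.cosh (2 * a) * Real.cosh (2 * b) - Real.sinh (2 * a) * Real.sinh (2 * b) * Real.cos γ) :
    2 * c < d := by
  have hpos : 0 < sinh a * sinh b * sin γ :=
    mul_pos (mul_pos (sinh_pos_iff.mpr ha) (sinh_pos_iff.mpr hb))
      (sin_pos_of_pos_of_lt_pi hγ.1 hγ.2)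
  have hgap := cosh_law_two_mul_sub_cosh_two_mul hcoshc
  rw [← hcoshd] at hgap
  exact lt_of_cosh_lt_cosh_of_nonneg hd (by linarith [pow_pos hpos 2])

theorem hyperbolic_half_triangle_strict (a b : ℝ) (ha : 0 < a) (hb : 0 < b)
    (γ : ℝ) (hγ : γ ∈ Set.Ioo 0 Real.pi) (c d : ℝ) (hc : 0 ≤ c) (hd : 0 ≤ d)
    (hcoshc : Real.cosh c = Real.cosh a * Real.cosh b - Real.sinh a * Real.sinh b * Real.cos γ)
    (hcoshd : Real.cosh d =
      Real.cosh (2 * a) * Real.cosh (2 * b) - Real.sinh (2 * a) * Real.sinh (2 * b) * Real.cos γ) :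
    2 * c < d :=
  hyperbolic_half_triangle_strict_general a b ha hb γ hγ c d hd hcoshc hcoshd
end
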